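/- arXiv:2412.20120 — 2 statements merged into one kernel-verified Lean document; each statement's English description precedes it below -/
import Mathlib

section
/- Every outerplanar graph with at least 4 vertices has two nonadjacent vertices each of degree at most 2. -/
open SimpleGraph

variable {V : Type*}

/-- A finite graph is outerplanar iff its vertices can be placed (in some order) on a
circle so that all edges can be drawn as pairwise non-crossing chords.  Cutting the
circle open, this says there is a bijection `f : V ≃ Fin n` such that no two edges
interleave: there are no edges `ab`, `cd` with `f a < f c < f b < f d`. -/
def Outerplanar [Fintype V] (G : SimpleGraph V) : Prop :=
  ∃ f : V ≃ Fin (Fintype.card V), ∀ a b c d : V, G.Adj a b → G.Adj c d →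
    ¬ (f a < f c ∧ f c < f b ∧ f b < f d)

/-!
Place the vertices on a line at positions `0, …, n-1` so that no two edges interleave. An edge
`ab` then seals off the positions strictly between `a` and `b`: no edge leaves that stretch.
In a sealed stretch `(l, r)` with `l + 2 ≤ r`, the vertex `u` at `l + 1` either has all its
neighbours at `l` and `l + 2`, or has an edge to some `w` with `l + 3 ≤ p w ≤ r`, and we recurse
into the strictly shorter sealed stretch `(p u, p w)`. So every sealed stretch contains a vertex
whose neighbours are all consecutive to it.

If the vertex `z` at position `0` has no neighbour `m` with `2 ≤ p m ≤ n - 2`, then `z` has degree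
at most `2` and `(1, n-1)` is sealed. Otherwise take `p m` maximal: `(0, p m)` is sealed, and so
is `(p m, n-1)`, unless `p m = n - 2`, in which case the vertex at `n - 1` can only be adjacent to
the vertices at `0` and `n - 2`.
-/

namespace SimpleGraph

variable (G : SimpleGraph V) (p : V → ℕ)

def IsNoncrossing : Prop :=
  ∀ a b c d, G.Adj a b → G.Adj c d → ¬ (p a < p c ∧ p c < p b ∧ p b < p d)

def IsSealed (l r : ℕ) : Prop :=
  ∀ x y, G.Adj x y → l < p x → p x < r → l ≤ p y ∧ p y ≤ r

variable {G p}

lemma degree_le_two_of_forall_adj [Fintype V] [DecidableRel G.Adj] {α : Type*} [DecidableEq α]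
    {q : V → α} (hq : Function.Injective q) {v : V} {i j : α}
    (h : ∀ w, G.Adj v w → q w = i ∨ q w = j) : G.degree v ≤ 2 :=
  calc G.degree v = (G.neighborFinset v).card := (G.card_neighborFinset_eq_degree v).symm
    _ ≤ ({i, j} : Finset α).card := Finset.card_le_card_of_injOn q
        (fun w hw => by simpa using h w ((G.mem_neighborFinset v w).1 hw)) hq.injOn
    _ ≤ 2 := Finset.card_le_two

lemma IsNoncrossing.isSealed_of_adj (hcr : G.IsNoncrossing p) {a b : V} (hab : G.Adj a b) :
    G.IsSealed p (p a) (p b) := by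
  intro x y hxy hax hxb
  have h₁ := hcr y x a b hxy.symm hab
  have h₂ := hcr a b x y hab hxy
  omega

lemma IsNoncrossing.exists_consecutive_neighbors (hcr : G.IsNoncrossing p)
    (hp : Function.Injective p) {n : ℕ} (hsurj : Set.Iio n ⊆ Set.range p)
    (l r : ℕ) (hlr : l + 2 ≤ r) (hrn : r ≤ n) (hsealed : G.IsSealed p l r) :
    ∃ v, l < p v ∧ p v < r ∧ ∀ w, G.Adj v w → p w = p v - 1 ∨ p w = p v + 1 := by
  obtain ⟨u, hu⟩ := hsurj (show l + 1 < n by omega)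
  by_cases hlong : ∃ w, G.Adj u w ∧ p u + 2 ≤ p w
  · obtain ⟨w, huw, hgap⟩ := hlong
    have hwr := (hsealed u w huw (by omega) (by omega)).2
    obtain ⟨v, hv₁, hv₂, hv⟩ := hcr.exists_consecutive_neighbors hp hsurj (p u) (p w) hgap
      (by omega) (hcr.isSealed_of_adj huw)
    exact ⟨v, by omega, by omega, hv⟩
  · refine ⟨u, by omega, by omega, fun w huw => ?_⟩
    have hne : p u ≠ p w := fun h => G.ne_of_adj huw (hp h)
    have := hsealed u w huw (by omega) (by omega)
    have : ¬ p u + 2 ≤ p w := fun h => hlong ⟨w, huw, h⟩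
    omega
termination_by r - l

variable [Fintype V] [DecidableRel G.Adj]

lemma exists_nonadj_of_consecutive_neighbors (hp : Function.Injective p) {u v : V}
    (hu : ∀ w, G.Adj u w → p w = p u - 1 ∨ p w = p u + 1) (hv : G.degree v ≤ 2)
    (huv : p u + 2 ≤ p v ∨ p v + 2 ≤ p u) :
    ∃ a b : V, a ≠ b ∧ ¬ G.Adj a b ∧ G.degree a ≤ 2 ∧ G.degree b ≤ 2 := by
  refine ⟨u, v, fun h => ?_, fun h => ?_, degree_le_two_of_forall_adj hp hu, hv⟩
  · subst h; omega
  · have := hu v h; omega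

variable (hcr : G.IsNoncrossing p) (hp : Function.Injective p) {n : ℕ}
  (hsurj : Set.Iio n ⊆ Set.range p) (hlt : ∀ v, p v < n)
include hcr hp hsurj hlt

lemma IsNoncrossing.exists_nonadj_of_farthest_chord {z m : V} (hz : p z = 0) (hzm : G.Adj z m)
    (hm₂ : 2 ≤ p m) (hmn : p m + 2 ≤ n) (hmax : ∀ x, G.Adj z x → p x + 2 ≤ n → p x ≤ p m) :
    ∃ a b : V, a ≠ b ∧ ¬ G.Adj a b ∧ G.degree a ≤ 2 ∧ G.degree b ≤ 2 := by
  obtain ⟨u, -, hu₁, hu⟩ := hcr.exists_consecutive_neighbors hp hsurj 0 (p m) hm₂ (by omega)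
    (hz ▸ hcr.isSealed_of_adj hzm)
  by_cases hm₃ : p m + 3 ≤ n
  · have hright : G.IsSealed p (p m) (n - 1) := by
      intro x y hxy hmx hxn
      refine ⟨?_, by have := hlt y; omega⟩
      by_contra! hym
      by_cases hyz : y = z
      · subst hyz
        have := hmax x hxy.symm (by omega)
        omega
      · have hy₀ : p y ≠ 0 := fun h => hyz (hp (h.trans hz.symm))
        have := hcr z m y x hzm hxy.symm
        omega
    obtain ⟨v, hv₁, -, hv⟩ := hcr.exists_consecutive_neighbors hp hsurj (p m) (n - 1)
      (by omega) (by omega) hright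
    exact exists_nonadj_of_consecutive_neighbors hp hu (degree_le_two_of_forall_adj hp hv)
      (by omega)
  · obtain ⟨t, ht⟩ := hsurj (show n - 1 < n by omega)
    have ht_adj : ∀ y, G.Adj t y → p y = 0 ∨ p y = n - 2 := fun y hty => by
      have hne : p t ≠ p y := fun h => G.ne_of_adj hty (hp h)
      have := hlt y
      have := hcr z m y t hzm hty.symm
      omega
    exact exists_nonadj_of_consecutive_neighbors hp hu (degree_le_two_of_forall_adj hp ht_adj)
      (by omega)

lemma IsNoncrossing.exists_nonadj_of_adj_eq_one_or_last {z : V} (hz : p z = 0) (hn : 4 ≤ n)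
    (hz_adj : ∀ w, G.Adj z w → p w = 1 ∨ p w = n - 1) :
    ∃ a b : V, a ≠ b ∧ ¬ G.Adj a b ∧ G.degree a ≤ 2 ∧ G.degree b ≤ 2 := by
  have hsealed : G.IsSealed p 1 (n - 1) := by
    intro x y hxy h1x hxn
    refine ⟨Nat.one_le_iff_ne_zero.2 fun hy => ?_, by have := hlt y; omega⟩
    have := hz_adj x (hp (hz.trans hy.symm) ▸ hxy.symm)
    omega
  obtain ⟨v, hv₁, -, hv⟩ := hcr.exists_consecutive_neighbors hp hsurj 1 (n - 1) (by omega)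
    (by omega) hsealed
  exact exists_nonadj_of_consecutive_neighbors hp hv (degree_le_two_of_forall_adj hp hz_adj)
    (by omega)

lemma IsNoncrossing.exists_nonadj_degree_le_two (hn : 4 ≤ n) :
    ∃ a b : V, a ≠ b ∧ ¬ G.Adj a b ∧ G.degree a ≤ 2 ∧ G.degree b ≤ 2 := by
  classical
  obtain ⟨z, hz⟩ := hsurj (show 0 < n by omega)
  by_cases hchord : ∃ w, G.Adj z w ∧ 2 ≤ p w ∧ p w + 2 ≤ n
  · obtain ⟨w, hzw, hw₂, hwn⟩ := hchord
    obtain ⟨m, hm, hmax⟩ := Finset.exists_max_image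
      {x | G.Adj z x ∧ p x + 2 ≤ n} p ⟨w, by simp [hzw, hwn]⟩
    simp only [Finset.mem_filter, Finset.mem_univ, true_and] at hm hmax
    exact hcr.exists_nonadj_of_farthest_chord hp hsurj hlt hz hm.1
      ((hmax w ⟨hzw, hwn⟩).trans' hw₂) hm.2 fun x hzx hxn => hmax x ⟨hzx, hxn⟩
  · refine hcr.exists_nonadj_of_adj_eq_one_or_last hp hsurj hlt hz hn fun w hzw => ?_
    have hw₀ : p w ≠ 0 := fun h => G.ne_of_adj hzw (hp (hz.trans h.symm))
    have := hlt w
    by_contra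
    exact hchord ⟨w, hzw, by omega, by omega⟩

end SimpleGraph

/-- Every outerplanar graph with at least 4 vertices has two nonadjacent vertices each
of degree at most 2. -/
theorem stmt_2 [Fintype V] (G : SimpleGraph V) [DecidableRel G.Adj]
    (hG : Outerplanar G) (hcard : 4 ≤ Fintype.card V) :
    ∃ a b : V, a ≠ b ∧ ¬ G.Adj a b ∧ G.degree a ≤ 2 ∧ G.degree b ≤ 2 := by
  obtain ⟨f, hf⟩ := hG
  exact IsNoncrossing.exists_nonadj_degree_le_two (p := fun v => (f v : ℕ))
    hf (Fin.val_injective.comp f.injective)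
    (fun i hi => ⟨f.symm ⟨i, hi⟩, by simp⟩) (fun v => (f v).2) hcard
end

section
/- Let G be a finite simple graph and C a minimum clique partition of G. Suppose J ⊆ V(G) is θ-independent in C (each clique of C contains at most one vertex of J), and suppose there exists a clique W ∈ C such that J dominates W and J ∩ W = ∅. Then γ(G) < θ(G). -/
open SimpleGraph

variable {V : Type*}

/-- `D` is a dominating set of `G`: every vertex not in `D` has a neighbor in `D`. -/
def IsDomSet (G : SimpleGraph V) (D : Finset V) : Prop :=
  ∀ v : V, v ∉ D → ∃ u ∈ D, G.Adj u v

/-- The domination number `γ(G)`. -/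
noncomputable def domNum [Fintype V] (G : SimpleGraph V) : ℕ :=
  sInf {n | ∃ D : Finset V, IsDomSet G D ∧ D.card = n}

/-- `P` is a partition of the vertex set of `G` into cliques. -/
def IsCliquePartition (G : SimpleGraph V) (P : Finset (Finset V)) : Prop :=
  (∀ C ∈ P, G.IsClique (C : Set V)) ∧ ∀ v : V, ∃! C : Finset V, C ∈ P ∧ v ∈ C

/-- The clique covering number `θ(G)`. -/
noncomputable def cliqueCoverNum [Fintype V] (G : SimpleGraph V) : ℕ :=
  sInf {n | ∃ P : Finset (Finset V), IsCliquePartition G P ∧ P.card = n}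

/-- `J` is θ-independent in the clique partition `P`: each clique of `P` contains at
most one vertex of `J`. -/
def ThetaIndepIn (P : Finset (Finset V)) (J : Finset V) : Prop :=
  ∀ C ∈ P, ∀ a ∈ J, ∀ b ∈ J, a ∈ C → b ∈ C → a = b

/-!
Pick one vertex in every clique of `C` other than `W`, taking the vertex of `J` whenever the
clique has one; θ-independence makes this choice possible. Every clique containing a chosen
vertex is dominated by it, and `W` is dominated by `J`, which lies among the chosen vertices
because it misses `W`. So `G` has a dominating set of size at most `θ(G) - 1`.
-/

open Finset

def Dominates (G : SimpleGraph V) (D W : Finset V) : Prop :=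
  ∀ w ∈ W, w ∈ D ∨ ∃ u ∈ D, G.Adj u w

theorem Dominates.mono {G : SimpleGraph V} {D D' W : Finset V} (h : Dominates G D W)
    (hD : D ⊆ D') : Dominates G D' W := by
  intro w hw
  rcases h w hw with hwD | ⟨u, huD, hadj⟩
  · exact Or.inl (hD hwD)
  · exact Or.inr ⟨u, hD huD, hadj⟩

theorem SimpleGraph.IsClique.dominates {G : SimpleGraph V} {D X : Finset V}
    (hX : G.IsClique (X : Set V)) {u : V} (huX : u ∈ X) (huD : u ∈ D) : Dominates G D X := by
  intro w hw
  by_cases huw : u = w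
  · exact Or.inl (huw ▸ huD)
  · exact Or.inr ⟨u, huD, hX huX hw huw⟩

theorem IsCliquePartition.isDomSet {G : SimpleGraph V} {P : Finset (Finset V)}
    (hP : IsCliquePartition G P) {D : Finset V} (h : ∀ X ∈ P, Dominates G D X) :
    IsDomSet G D := by
  intro v hv
  obtain ⟨X, ⟨hXP, hvX⟩, -⟩ := hP.2 v
  exact (h X hXP v hvX).resolve_left hv

theorem domNum_le_card [Fintype V] {G : SimpleGraph V} {D : Finset V} (hD : IsDomSet G D) :
    domNum G ≤ #D :=
  Nat.sInf_le ⟨D, hD, rfl⟩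

theorem ThetaIndepIn.mono {P Q : Finset (Finset V)} {J : Finset V} (h : ThetaIndepIn P J)
    (hQ : Q ⊆ P) : ThetaIndepIn Q J :=
  fun X hX => h X (hQ hX)

theorem ThetaIndepIn.card_inter_le_one [DecidableEq V] {P : Finset (Finset V)} {J X : Finset V}
    (h : ThetaIndepIn P J) (hX : X ∈ P) : #(X ∩ J) ≤ 1 := by
  rw [card_le_one]
  intro a ha b hb
  rw [mem_inter] at ha hb
  exact h X hX a ha.2 b hb.2 ha.1 hb.1

theorem Finset.exists_subset_card_le_one_of_inter [DecidableEq V] {X J : Finset V} (h : #(X ∩ J) ≤ 1) :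
    ∃ S ⊆ X, #S ≤ 1 ∧ X ∩ J ⊆ S ∧ (X.Nonempty → S.Nonempty) := by
  by_cases hXJ : (X ∩ J).Nonempty
  · exact ⟨X ∩ J, inter_subset_left, h, subset_rfl, fun _ => hXJ⟩
  · rw [not_nonempty_iff_eq_empty] at hXJ
    rcases X.eq_empty_or_nonempty with rfl | ⟨x, hx⟩
    · exact ⟨∅, subset_rfl, by simp, by simp, id⟩
    · exact ⟨{x}, singleton_subset_iff.mpr hx, by simp, by simp [hXJ], fun _ => ⟨x, by simp⟩⟩

theorem ThetaIndepIn.exists_dominating [DecidableEq V] {G : SimpleGraph V}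
    {Q : Finset (Finset V)} (hQ : ∀ X ∈ Q, G.IsClique (X : Set V)) {J : Finset V}
    (hJ : ThetaIndepIn Q J) :
    ∃ D : Finset V, #D ≤ #Q ∧ (∀ X ∈ Q, X ∩ J ⊆ D) ∧ ∀ X ∈ Q, Dominates G D X := by
  have hrep (X : Finset V) (hX : X ∈ Q) :=
    exists_subset_card_le_one_of_inter (hJ.card_inter_le_one hX)
  choose! S hSX hS1 hJS hSne using hrep
  refine ⟨Q.biUnion S, ?_, fun X hX => (hJS X hX).trans (subset_biUnion_of_mem S hX), ?_⟩
  · calc #(Q.biUnion S) ≤ ∑ X ∈ Q, #(S X) := card_biUnion_le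
      _ ≤ ∑ _X ∈ Q, 1 := sum_le_sum hS1
      _ = #Q := by simp
  · intro X hX w hw
    obtain ⟨u, hu⟩ := hSne X hX ⟨w, hw⟩
    exact (hQ X hX).dominates (hSX X hX hu) (mem_biUnion.mpr ⟨X, hX, hu⟩) w hw

/-- If `C` is a minimum clique partition of `G`, `J` is θ-independent in `C`, and some
clique `W ∈ C` is dominated by `J` with `J ∩ W = ∅`, then `γ(G) < θ(G)`. -/
theorem stmt_5 [Fintype V] (G : SimpleGraph V)
    (C : Finset (Finset V)) (hC : IsCliquePartition G C)
    (hCmin : C.card = cliqueCoverNum G)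
    (J : Finset V) (hJ : ThetaIndepIn C J)
    (W : Finset V) (hW : W ∈ C)
    (hdom : ∀ w ∈ W, w ∈ J ∨ ∃ x ∈ J, G.Adj x w)
    (hdisj : Disjoint J W) :
    domNum G < cliqueCoverNum G := by
  classical
  obtain ⟨D, hDcard, hJD, hDdom⟩ := (hJ.mono (erase_subset W C)).exists_dominating
    (G := G) fun X hX => hC.1 X (mem_of_mem_erase hX)
  have hJsubD : J ⊆ D := by
    intro j hj
    obtain ⟨X, ⟨hXC, hjX⟩, -⟩ := hC.2 j
    have hXW : X ≠ W := by
      rintro rfl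
      exact disjoint_left.mp hdisj hj hjX
    exact hJD X (mem_erase.mpr ⟨hXW, hXC⟩) (mem_inter.mpr ⟨hjX, hj⟩)
  have hD : IsDomSet G D := hC.isDomSet fun X hX => by
    by_cases hXW : X = W
    · exact hXW ▸ Dominates.mono hdom hJsubD
    · exact hDdom X (mem_erase.mpr ⟨hXW, hX⟩)
  calc domNum G ≤ #D := domNum_le_card hD
    _ ≤ #(C.erase W) := hDcard
    _ < #C := card_erase_lt_of_mem hW
    _ = cliqueCoverNum G := hCmin
end
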